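/- arXiv:1201.3135 — 5 statements merged into one kernel-verified Lean document; each statement's English description precedes it below -/
import Mathlib

section
/- With p_1(t,x,x) = (1 - e^{-x^2/t})/sqrt(4πt), for every real x one has ∫_0^∞ p_1(t,x,x) dt = |x|. -/
/-!
For `a = x² > 0` the function `t ↦ (1 - e^{-a/t}) / √t` has the explicit primitive
`2√t (1 - e^{-a/t}) - 4√a ∫₀^{√(a/t)} e^{-v²} dv`, which tends to `0` as `t → ∞` and, by the
Gaussian integral `∫₀^∞ e^{-v²} dv = √π / 2`, to `-2√(πa)` as `t → 0⁺`. Since the integrand is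
nonnegative, the improper fundamental theorem of calculus gives `∫₀^∞ (1 - e^{-a/t}) / √t dt = 2√(πa)`,
and dividing by `√(4π) = 2√π` leaves `√a = |x|`.
-/

open MeasureTheory Real Filter Set Topology

theorem integral_Ioi_of_hasDerivAt_of_nonneg_of_tendsto_nhdsGT {f f' : ℝ → ℝ} {a m₀ m : ℝ}
    (hderiv : ∀ x ∈ Ioi a, HasDerivAt f (f' x) x) (hf' : ∀ x ∈ Ioi a, 0 ≤ f' x)
    (hf₀ : Tendsto f (𝓝[>] a) (𝓝 m₀)) (hf : Tendsto f atTop (𝓝 m)) :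
    ∫ x in Ioi a, f' x = m - m₀ := by
  set g := Function.update f a m₀
  have hga : g a = m₀ := Function.update_self ..
  have hfg : EqOn f g (Ioi a) := fun x hx ↦ (Function.update_of_ne hx.ne' _ _).symm
  have hcont : ContinuousWithinAt g (Ici a) a := by
    rw [← continuousWithinAt_Ioi_iff_Ici, ContinuousWithinAt, hga]
    exact hf₀.congr' (eventually_nhdsWithin_of_forall hfg)
  have hderiv' : ∀ x ∈ Ioi a, HasDerivAt g (f' x) x := fun x hx ↦
    (hderiv x hx).congr_of_eventuallyEq
      (eventually_of_mem (Ioi_mem_nhds hx) fun y hy ↦ (hfg hy).symm)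
  rw [integral_Ioi_of_hasDerivAt_of_nonneg hcont hderiv' hf'
    (hf.congr' (eventually_of_mem (Ioi_mem_atTop a) hfg)), hga]

theorem exp_neg_div_le_one {a t : ℝ} (ha : 0 ≤ a) (ht : 0 ≤ t) : exp (-a / t) ≤ 1 :=
  exp_le_one_iff.2 (div_nonpos_of_nonpos_of_nonneg (neg_nonpos.2 ha) ht)

noncomputable def gaussianPrimitive (u : ℝ) : ℝ := ∫ v in (0 : ℝ)..u, exp (-v ^ 2)

theorem hasDerivAt_gaussianPrimitive (u : ℝ) :
    HasDerivAt gaussianPrimitive (exp (-u ^ 2)) u :=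
  have hcont : Continuous fun v : ℝ ↦ exp (-v ^ 2) := by fun_prop
  intervalIntegral.integral_hasDerivAt_right (hcont.intervalIntegrable _ _)
    (hcont.stronglyMeasurableAtFilter _ _) hcont.continuousAt

theorem continuous_gaussianPrimitive : Continuous gaussianPrimitive :=
  continuous_iff_continuousAt.2 fun u ↦ (hasDerivAt_gaussianPrimitive u).continuousAt

@[simp]
theorem gaussianPrimitive_zero : gaussianPrimitive 0 = 0 := by simp [gaussianPrimitive]

theorem tendsto_gaussianPrimitive_atTop : Tendsto gaussianPrimitive atTop (𝓝 (√π / 2)) := by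
  have hint : IntegrableOn (fun v : ℝ ↦ exp (-v ^ 2)) (Ioi 0) := by
    simpa using (integrable_exp_neg_mul_sq one_pos).integrableOn
  have hval : ∫ v in Ioi (0 : ℝ), exp (-v ^ 2) = √π / 2 := by
    simpa using integral_gaussian_Ioi 1
  exact hval ▸ intervalIntegral_tendsto_integral_Ioi 0 hint tendsto_id

section HeatPrimitive

variable {a : ℝ}

noncomputable def heatPrimitive (a t : ℝ) : ℝ :=
  2 * √t * (1 - exp (-a / t)) - 4 * √a * gaussianPrimitive √(a / t)

theorem hasDerivAt_heatPrimitive (ha : 0 < a) {t : ℝ} (ht : 0 < t) :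
    HasDerivAt (heatPrimitive a) ((1 - exp (-a / t)) / √t) t := by
  have hdiv (c : ℝ) : HasDerivAt (fun s ↦ c / s) (-c / t ^ 2) t :=
    ((hasDerivAt_const t c).fun_div (hasDerivAt_id' t) ht.ne').congr_deriv (by ring)
  have hu := (hdiv a).sqrt (div_pos ha ht).ne'
  have := (((hasDerivAt_sqrt ht.ne').const_mul 2).fun_mul ((hasDerivAt_const t 1).fun_sub
    (hdiv (-a)).exp)).fun_sub (((hasDerivAt_gaussianPrimitive _).comp t hu).const_mul (4 * √a))
  refine this.congr_deriv ?_
  rw [sq_sqrt (div_pos ha ht).le, sqrt_div ha.le]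
  have : 0 < √t := sqrt_pos.2 ht
  have : 0 < √a := sqrt_pos.2 ha
  field_simp
  rw [sq_sqrt ht.le]
  ring

theorem tendsto_heatPrimitive_nhdsGT_zero (ha : 0 < a) :
    Tendsto (heatPrimitive a) (𝓝[>] 0) (𝓝 (-(2 * √π * √a))) := by
  have hdiv : Tendsto (fun t ↦ a / t) (𝓝[>] 0) atTop := by
    simpa only [div_eq_mul_inv] using tendsto_inv_nhdsGT_zero.const_mul_atTop ha
  have hsqrt : Tendsto (√·) (𝓝[>] (0 : ℝ)) (𝓝 0) := by
    simpa using continuous_sqrt.continuousWithinAt.tendsto (s := Ioi (0 : ℝ)) (x := 0)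
  have hexp : Tendsto (fun t ↦ exp (-a / t)) (𝓝[>] 0) (𝓝 0) := by
    simpa only [neg_div, Function.comp_def] using tendsto_exp_neg_atTop_nhds_zero.comp hdiv
  have := ((hsqrt.const_mul 2).mul ((tendsto_const_nhds (x := 1)).sub hexp)).sub
    ((tendsto_gaussianPrimitive_atTop.comp (tendsto_sqrt_atTop.comp hdiv)).const_mul (4 * √a))
  rw [show -(2 * √π * √a) = 2 * 0 * (1 - 0) - 4 * √a * (√π / 2) by ring]
  exact this

theorem tendsto_heatPrimitive_atTop (ha : 0 ≤ a) : Tendsto (heatPrimitive a) atTop (𝓝 0) := by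
  have hfirst : Tendsto (fun t ↦ 2 * √t * (1 - exp (-a / t))) atTop (𝓝 0) := by
    refine squeeze_zero' ?_ ?_ ((tendsto_const_nhds (x := 2 * a)).div_atTop tendsto_sqrt_atTop)
    · filter_upwards [eventually_gt_atTop 0] with t ht
      have := exp_neg_div_le_one ha ht.le
      positivity
    · filter_upwards [eventually_gt_atTop 0] with t ht
      calc 2 * √t * (1 - exp (-a / t)) ≤ 2 * √t * (a / t) := by
            gcongr
            rw [neg_div]
            linarith [one_sub_le_exp_neg (a / t)]
        _ = 2 * a / √t := by
            have := sqrt_pos.2 ht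
            field_simp
            simp [ht.le, mul_comm]
  have hsecond : Tendsto (fun t ↦ gaussianPrimitive √(a / t)) atTop (𝓝 0) := by
    simpa [Function.comp_def] using continuous_gaussianPrimitive.continuousAt.tendsto.comp
      ((tendsto_const_nhds.div_atTop tendsto_id).sqrt)
  have := hfirst.sub (hsecond.const_mul (4 * √a))
  rwa [mul_zero, sub_zero] at this

theorem integral_one_sub_exp_neg_div_div_sqrt (ha : 0 ≤ a) :
    ∫ t in Ioi 0, (1 - exp (-a / t)) / √t = 2 * √π * √a := by
  rcases ha.eq_or_lt with rfl | ha
  · simp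
  rw [integral_Ioi_of_hasDerivAt_of_nonneg_of_tendsto_nhdsGT
    (fun t ht ↦ hasDerivAt_heatPrimitive ha ht)
    (fun t ht ↦ div_nonneg (sub_nonneg.2 (exp_neg_div_le_one ha.le (le_of_lt ht))) (sqrt_nonneg t))
    (tendsto_heatPrimitive_nhdsGT_zero ha) (tendsto_heatPrimitive_atTop ha.le)]
  ring

end HeatPrimitive

/-- With `p₁(t,x,x) = (1 - e^{-x²/t})/√(4πt)`, for every real `x` one has
`∫₀^∞ p₁(t,x,x) dt = |x|`. -/
theorem integral_dirichlet_heat_kernel_diagonal (x : ℝ) :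
    ∫ t in Set.Ioi (0 : ℝ),
      (1 - Real.exp (-x ^ 2 / t)) / Real.sqrt (4 * Real.pi * t) = |x| := by
  have hsplit (t : ℝ) : √(4 * π * t) = 2 * √π * √t := by
    rw [sqrt_mul (by positivity), sqrt_mul (by norm_num), show (4 : ℝ) = 2 ^ 2 by norm_num,
      sqrt_sq zero_le_two]
  simp_rw [hsplit, mul_comm (2 * √π), ← div_div, integral_div,
    integral_one_sub_exp_neg_div_div_sqrt (sq_nonneg x), sqrt_sq_eq_abs]
  field_simp
end

section
/- For any real β and any t > 2, ∫_0^∞ (2π)/((β + ln σ)^2 + π^2) · e^{-σ t} dσ is comparable to 1/((1+t) ln^2(2+t)): there exist constants 0 < C_1 ≤ C_2 (depending on β) with C_1/((1+t) ln^2(2+t)) ≤ ∫_0^∞ 2π e^{-σ t}/((β+ln σ)^2+π^2) dσ ≤ C_2/((1+t) ln^2(2+t)) for all t > 2. -/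
/-!
On the region `σ ≍ 1/t` that carries the mass of `e^{-σt}` we have `log σ ≈ -log t`, so the factor
`2π / ((β + log σ)² + π²)` is of size `1 / log² t`, while it is bounded by `2/π` everywhere.
Lower bound: integrate over `(1/t, 2/t]`, where `|log σ| ≤ log (2 + t)`.
Upper bound for `log t ≥ 4 (|β| + 1)`: split at `σ = t^{-1/2}`; below it `|β + log σ| ≥ (log t)/4`,
above it the exponential contributes only `e^{-√t}/t`. On the remaining bounded range of `t`
the trivial bound `2 / (π t)` suffices.
-/

open MeasureTheory Set Real

namespace InverseLaplaceLog

noncomputable def integrand (β t σ : ℝ) : ℝ :=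
  2 * π * exp (-σ * t) / ((β + log σ) ^ 2 + π ^ 2)

noncomputable def decayRate (t : ℝ) : ℝ :=
  (1 + t) * log (2 + t) ^ 2

lemma integrand_nonneg (β t σ : ℝ) : 0 ≤ integrand β t σ := by
  unfold integrand; positivity

lemma measurable_integrand (β t : ℝ) : Measurable (integrand β t) := by
  unfold integrand; fun_prop

lemma integrand_le {β t σ c : ℝ} (hc : 0 < c) (h : c ≤ (β + log σ) ^ 2 + π ^ 2) :
    integrand β t σ ≤ 2 * π / c * exp (-σ * t) :=
  calc integrand β t σ ≤ 2 * π * exp (-σ * t) / c :=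
        div_le_div_of_nonneg_left (by positivity) hc h
    _ = 2 * π / c * exp (-σ * t) := by ring

lemma integrand_le_two_div_pi (β t σ : ℝ) : integrand β t σ ≤ 2 / π * exp (-σ * t) := by
  convert integrand_le (by positivity) (le_add_of_nonneg_left (sq_nonneg (β + log σ))) using 2
  field_simp

lemma integrableOn_exp_neg_mul_Ioi {t : ℝ} (ht : 0 < t) (a : ℝ) :
    IntegrableOn (fun σ ↦ exp (-σ * t)) (Ioi a) := by
  simpa [mul_comm] using integrableOn_exp_mul_Ioi (neg_lt_zero.2 ht) a

lemma integral_exp_neg_mul_Ioi {t : ℝ} (ht : 0 < t) (a : ℝ) :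
    ∫ σ in Ioi a, exp (-σ * t) = exp (-a * t) / t := by
  simpa [mul_comm, neg_div_neg_eq] using integral_exp_mul_Ioi (neg_lt_zero.2 ht) a

lemma integrableOn_integrand (β : ℝ) {t : ℝ} (ht : 0 < t) (a : ℝ) :
    IntegrableOn (integrand β t) (Ioi a) :=
  ((integrableOn_exp_neg_mul_Ioi ht a).const_mul (2 / π)).mono'
    (measurable_integrand β t).aestronglyMeasurable <| Filter.Eventually.of_forall fun σ ↦ by
      rw [Real.norm_of_nonneg (integrand_nonneg β t σ)]
      exact integrand_le_two_div_pi β t σ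

lemma setIntegral_integrand_le {β t a c : ℝ} {s : Set ℝ} (ht : 0 < t) (hc : 0 < c)
    (hs : MeasurableSet s) (hsa : s ⊆ Ioi a) (hden : ∀ σ ∈ s, c ≤ (β + log σ) ^ 2 + π ^ 2) :
    ∫ σ in s, integrand β t σ ≤ 2 * π / c * (exp (-a * t) / t) := by
  have hexp : IntegrableOn (fun σ ↦ 2 * π / c * exp (-σ * t)) (Ioi a) :=
    (integrableOn_exp_neg_mul_Ioi ht a).const_mul _
  calc ∫ σ in s, integrand β t σ ≤ ∫ σ in s, 2 * π / c * exp (-σ * t) :=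
        setIntegral_mono_on ((integrableOn_integrand β ht a).mono_set hsa) (hexp.mono_set hsa) hs
          fun σ hσ ↦ integrand_le hc (hden σ hσ)
    _ ≤ ∫ σ in Ioi a, 2 * π / c * exp (-σ * t) :=
        setIntegral_mono_set hexp (Filter.Eventually.of_forall fun σ ↦ by positivity)
          (LE.le.eventuallyLE hsa)
    _ = 2 * π / c * (exp (-a * t) / t) := by
        rw [integral_const_mul, integral_exp_neg_mul_Ioi ht]

lemma integral_integrand_le_div (β : ℝ) {t : ℝ} (ht : 0 < t) :
    ∫ σ in Ioi 0, integrand β t σ ≤ 2 / π / t := by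
  have h := setIntegral_integrand_le (β := β) (a := 0) ht (pow_pos pi_pos 2) measurableSet_Ioi
    subset_rfl fun σ _ ↦ le_add_of_nonneg_left (sq_nonneg _)
  convert h using 1
  field_simp
  simp

lemma exp_neg_sqrt_mul_log_sq_le {t : ℝ} (ht : 1 ≤ t) : exp (-√t) * log t ^ 2 ≤ 8 := by
  have hs : 0 < √t := sqrt_pos.2 (by linarith)
  have hsq : √t ^ 2 = t := sq_sqrt (by linarith)
  have hlog_nonneg : 0 ≤ log t := log_nonneg ht
  have hlog : log t ≤ 2 * √t := by
    have := log_le_sub_one_of_pos hs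
    rw [log_sqrt (by linarith)] at this
    linarith
  have hexp : t / 2 ≤ exp √t := by
    have := quadratic_le_exp_of_nonneg hs.le
    nlinarith
  rw [exp_neg, inv_mul_le_iff₀ (exp_pos _)]
  nlinarith

lemma integral_Ioc_integrand_le (β : ℝ) {t : ℝ} (ht : 0 < t) (hlogt : 4 * (|β| + 1) ≤ log t) :
    ∫ σ in Ioc 0 (√t)⁻¹, integrand β t σ ≤ 32 * π / (t * log t ^ 2) := by
  have hL : 0 < log t := by linarith [abs_nonneg β]
  calc ∫ σ in Ioc 0 (√t)⁻¹, integrand β t σ ≤ 2 * π / (log t ^ 2 / 16) * (exp (-0 * t) / t) :=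
        setIntegral_integrand_le ht (by positivity) measurableSet_Ioc Ioc_subset_Ioi_self
          fun σ hσ ↦ by
            -- `log σ ≤ -(log t)/2` and `|β| ≤ (log t)/4`, so `β + log σ ≤ -(log t)/4`.
            have hσa : log σ ≤ -(log t / 2) := by
              rw [← log_sqrt ht.le, ← log_inv]
              exact log_le_log hσ.1 hσ.2
            nlinarith [le_abs_self β, sq_nonneg π]
    _ = 32 * π / (t * log t ^ 2) := by
        field_simp
        simp only [neg_zero, zero_mul, exp_zero]
        ring

lemma integral_Ioi_integrand_le (β : ℝ) {t : ℝ} (ht : 1 < t) :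
    ∫ σ in Ioi (√t)⁻¹, integrand β t σ ≤ 16 / π / (t * log t ^ 2) := by
  have ht0 : 0 < t := by linarith
  have hL : 0 < log t := log_pos ht
  have hat : -(√t)⁻¹ * t = -√t := by
    rw [neg_mul, inv_mul_eq_div, div_sqrt]
  calc ∫ σ in Ioi (√t)⁻¹, integrand β t σ ≤ 2 * π / π ^ 2 * (exp (-(√t)⁻¹ * t) / t) :=
        setIntegral_integrand_le ht0 (by positivity) measurableSet_Ioi subset_rfl
          fun σ _ ↦ le_add_of_nonneg_left (sq_nonneg _)
    _ = 2 / π * (exp (-√t) * log t ^ 2) / (t * log t ^ 2) := by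
        rw [hat]
        field_simp
    _ ≤ 16 / π / (t * log t ^ 2) := by
        gcongr
        calc 2 / π * (exp (-√t) * log t ^ 2) ≤ 2 / π * 8 := by
              gcongr
              exact exp_neg_sqrt_mul_log_sq_le ht.le
          _ = 16 / π := by ring

lemma decayRate_pos {t : ℝ} (ht : -1 < t) : 0 < decayRate t := by
  have h1 : 0 < 1 + t := by linarith
  have h2 : 0 < log (2 + t) := log_pos (by linarith)
  unfold decayRate; positivity

lemma decayRate_le_decayRate {s t : ℝ} (hs : -1 ≤ s) (hst : s ≤ t) :
    decayRate s ≤ decayRate t := by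
  have hlog : 0 ≤ log (2 + s) := log_nonneg (by linarith)
  exact mul_le_mul (by linarith) (pow_le_pow_left₀ hlog (log_le_log (by linarith) (by linarith)) 2)
    (by positivity) (by linarith)

lemma decayRate_le {t : ℝ} (ht : 2 ≤ t) : decayRate t ≤ 8 * (t * log t ^ 2) := by
  have hlog : log (2 + t) ≤ 2 * log t := by
    rw [show 2 * log t = log (t ^ 2) by rw [log_pow]; norm_num]
    exact log_le_log (by linarith) (by nlinarith)
  have hlog0 : 0 ≤ log (2 + t) := log_nonneg (by linarith)
  unfold decayRate
  nlinarith [mul_le_mul hlog hlog hlog0 (by linarith)]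

lemma integral_integrand_le_of_exp_le (β : ℝ) {t : ℝ} (ht : exp (4 * (|β| + 1)) ≤ t) :
    ∫ σ in Ioi 0, integrand β t σ ≤ 8 * (32 * π + 16 / π) / decayRate t := by
  have ht0 : 0 < t := (exp_pos _).trans_le ht
  have hlogt : 4 * (|β| + 1) ≤ log t := by
    rwa [← log_exp (4 * (|β| + 1)), log_le_log_iff (exp_pos _) ht0]
  have hL : 0 < log t := by linarith [abs_nonneg β]
  have ht1 : 1 < t := (log_pos_iff ht0.le).1 hL
  have ht2 : 2 ≤ t := le_trans (by linarith [add_one_le_exp (4 * (|β| + 1)), abs_nonneg β]) ht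
  have ha : 0 < (√t)⁻¹ := inv_pos.2 (sqrt_pos.2 ht0)
  rw [← Ioc_union_Ioi_eq_Ioi ha.le, setIntegral_union (Ioc_disjoint_Ioi le_rfl) measurableSet_Ioi
    ((integrableOn_integrand β ht0 0).mono_set Ioc_subset_Ioi_self)
    (integrableOn_integrand β ht0 _)]
  calc (∫ σ in Ioc 0 (√t)⁻¹, integrand β t σ) + ∫ σ in Ioi (√t)⁻¹, integrand β t σ
      ≤ 32 * π / (t * log t ^ 2) + 16 / π / (t * log t ^ 2) :=
        add_le_add (integral_Ioc_integrand_le β ht0 hlogt) (integral_Ioi_integrand_le β ht1)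
    _ = 8 * (32 * π + 16 / π) / (8 * (t * log t ^ 2)) := by
        field_simp
    _ ≤ 8 * (32 * π + 16 / π) / decayRate t :=
        div_le_div_of_nonneg_left (by positivity) (decayRate_pos (by linarith)) (decayRate_le ht2)

lemma sq_add_log_add_pi_sq_le (β : ℝ) {σ L : ℝ} (hL : 1 ≤ L) (hσ : |log σ| ≤ L) :
    (β + log σ) ^ 2 + π ^ 2 ≤ ((|β| + 1) ^ 2 + π ^ 2) * L ^ 2 := by
  have habs : |β + log σ| ≤ (|β| + 1) * L := by
    nlinarith [abs_add_le β (log σ), abs_nonneg β]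
  have hsq : (β + log σ) ^ 2 ≤ ((|β| + 1) * L) ^ 2 := by
    rw [← sq_abs]; exact pow_le_pow_left₀ (abs_nonneg _) habs 2
  nlinarith [one_le_pow₀ (n := 2) hL, sq_nonneg π]

lemma le_integral_integrand (β : ℝ) {t : ℝ} (ht : 2 < t) :
    2 * π * exp (-2) / ((|β| + 1) ^ 2 + π ^ 2) / decayRate t ≤ ∫ σ in Ioi 0, integrand β t σ := by
  have ht0 : 0 < t := by linarith
  set K := (|β| + 1) ^ 2 + π ^ 2
  set L := log (2 + t)
  have hL : 1 ≤ L := by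
    rw [le_log_iff_exp_le (by linarith)]
    linarith [exp_one_lt_d9]
  have hlogt : log t ≤ L := log_le_log ht0 (by linarith)
  have hs : Ioc t⁻¹ (2 / t) ⊆ Ioi 0 := fun σ hσ ↦ (inv_pos.2 ht0).trans hσ.1
  have hpt : ∀ σ ∈ Ioc t⁻¹ (2 / t), 2 * π * exp (-2) / (K * L ^ 2) ≤ integrand β t σ := by
    intro σ ⟨hσ1, hσ2⟩
    have hσ0 : 0 < σ := (inv_pos.2 ht0).trans hσ1
    have hσt : σ * t ≤ 2 := (le_div_iff₀ ht0).1 hσ2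
    have hlogσ : |log σ| ≤ L := by
      have hlog_inv := log_le_log (inv_pos.2 ht0) hσ1.le
      rw [log_inv] at hlog_inv
      rw [abs_le]
      constructor
      · linarith
      · nlinarith [log_le_sub_one_of_pos hσ0]
    have hnum : exp (-2) ≤ exp (-σ * t) := exp_le_exp.2 (by linarith)
    rw [integrand]
    exact div_le_div₀ (by positivity) (mul_le_mul_of_nonneg_left hnum (by positivity))
      (by positivity) (sq_add_log_add_pi_sq_le β hL hlogσ)
  have hvol : volume.real (Ioc t⁻¹ (2 / t)) = t⁻¹ := by
    rw [Real.volume_real_Ioc_of_le (by rw [inv_eq_one_div]; gcongr; norm_num)]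
    ring
  have hKL : 0 < K * L ^ 2 := by positivity
  calc 2 * π * exp (-2) / K / decayRate t
      ≤ 2 * π * exp (-2) / (K * L ^ 2) * volume.real (Ioc t⁻¹ (2 / t)) := by
        rw [hvol, decayRate, div_div, ← div_eq_mul_inv, div_div]
        exact div_le_div_of_nonneg_left (by positivity) (by positivity) (by nlinarith)
    _ ≤ ∫ σ in Ioc t⁻¹ (2 / t), integrand β t σ :=
        setIntegral_ge_of_const_le_real measurableSet_Ioc measure_Ioc_lt_top.ne hpt
          ((integrableOn_integrand β ht0 0).mono_set hs)
    _ ≤ ∫ σ in Ioi 0, integrand β t σ :=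
        setIntegral_mono_set (integrableOn_integrand β ht0 0)
          (Filter.Eventually.of_forall (integrand_nonneg β t)) (LE.le.eventuallyLE hs)

lemma exists_le_div_decayRate {g : ℝ → ℝ} {A B T : ℝ} (hA : 0 ≤ A) (hB : 0 ≤ B)
    (hsmall : ∀ t, 2 < t → g t ≤ B / t) (hlarge : ∀ t, T ≤ t → g t ≤ A / decayRate t) :
    ∃ C, ∀ t, 2 < t → g t ≤ C / decayRate t := by
  set T' := max T 2
  refine ⟨A + B * decayRate T', fun t ht ↦ ?_⟩
  have hr : 0 < decayRate t := decayRate_pos (by linarith)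
  have hrT : 0 ≤ decayRate T' := (decayRate_pos (by linarith [le_max_right T 2])).le
  rw [add_div]
  rcases le_or_gt T' t with hT | hT
  · calc g t ≤ A / decayRate t := hlarge t ((le_max_left T 2).trans hT)
      _ ≤ A / decayRate t + B * decayRate T' / decayRate t :=
          le_add_of_nonneg_right (by positivity)
  · have hmono := decayRate_le_decayRate (by linarith) hT.le
    calc g t ≤ B / t := hsmall t ht
      _ ≤ B * decayRate T' / decayRate t := by
          rw [div_le_div_iff₀ (by linarith) hr]
          nlinarith [mul_le_mul_of_nonneg_left hmono hB, mul_nonneg hB hrT]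
      _ ≤ A / decayRate t + B * decayRate T' / decayRate t :=
          le_add_of_nonneg_left (by positivity)

end InverseLaplaceLog

open InverseLaplaceLog in
/-- For any real `β` and `t > 2`, the integral
`∫₀^∞ 2π e^{-σt}/((β + ln σ)² + π²) dσ` is comparable to `1/((1+t) ln²(2+t))`. -/
theorem inverse_laplace_log_asymptotics (β : ℝ) :
    ∃ C₁ C₂ : ℝ, 0 < C₁ ∧ C₁ ≤ C₂ ∧
      ∀ t : ℝ, 2 < t →
        C₁ / ((1 + t) * (Real.log (2 + t)) ^ 2) ≤
          (∫ σ in Set.Ioi (0 : ℝ),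
            2 * Real.pi * Real.exp (-σ * t) / ((β + Real.log σ) ^ 2 + Real.pi ^ 2)) ∧
        (∫ σ in Set.Ioi (0 : ℝ),
            2 * Real.pi * Real.exp (-σ * t) / ((β + Real.log σ) ^ 2 + Real.pi ^ 2)) ≤
          C₂ / ((1 + t) * (Real.log (2 + t)) ^ 2) := by
  obtain ⟨C, hC⟩ := exists_le_div_decayRate (g := fun t ↦ ∫ σ in Ioi 0, integrand β t σ)
    (by positivity) (by positivity) (fun t ht ↦ integral_integrand_le_div β (by linarith))
    (fun t ht ↦ integral_integrand_le_of_exp_le β ht)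
  set C₁ := 2 * π * exp (-2) / ((|β| + 1) ^ 2 + π ^ 2)
  refine ⟨C₁, max C₁ C, by positivity, le_max_left _ _, fun t ht ↦
    ⟨le_integral_integrand β ht, (hC t ht).trans ?_⟩⟩
  exact div_le_div_of_nonneg_right (le_max_right _ _) (decayRate_pos (by linarith)).le
end

section
/- For the hierarchical Laplacian with parameters ν ≥ 2 and 0 < p < 1, and spectral dimension s_h = 2 ln ν / ln(1/p), there exist positive constants C_1, C_2 such that C_1 t^{-s_h/2} ≤ p(t,x,x) ≤ C_2 t^{-s_h/2} for all t ≥ 1, where p(t,x,x) = (1 - 1/ν) Σ_{s=0}^∞ e^{-p^s t} ν^{-s}. -/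
/-!
With `α = log ν / log (1 / p)` one has `p ^ α = ν⁻¹`, so the `s`-th term
`exp (-p ^ s t) / ν ^ s` equals `t ^ (-α) φ(p ^ s t)` with `φ(x) = x ^ α e ^ (-x)`, and it
suffices to bound `∑ₛ φ(p ^ s t)` (`dilationSum p α t`) above and below by positive constants
for `t ≥ 1`. Pick `n` with
`p ^ (n + 1) t < 1 ≤ p ^ n t`. The single term `s = n + 1` is at least `p ^ α / e`.
Above `n`, `φ(p ^ s t) ≤ (p ^ s t) ^ α ≤ (p ^ α) ^ (s - n - 1)`; up to `n`, `φ(x) ≤ k! / x`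
for `x ≥ 1` and `k = ⌈α⌉ + 1` gives `φ(p ^ s t) ≤ k! p ^ (n - s)`. Both are geometric series.
-/

open Real Finset

theorem Real.rpow_mul_exp_neg_le_factorial_div {x : ℝ} (α : ℝ) (hx : 1 ≤ x) :
    x ^ α * exp (-x) ≤ (⌈α⌉₊ + 1).factorial / x := by
  set k := ⌈α⌉₊ + 1
  have hx0 : 0 < x := by linarith
  have hαk : α + 1 ≤ k := by push_cast [k]; linarith [Nat.le_ceil α]
  have hpow : x ^ (α + 1) ≤ x ^ k := by
    rw [← rpow_natCast]; exact rpow_le_rpow_of_exponent_le hx hαk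
  have hexp : x ^ k / k.factorial ≤ exp x := pow_div_factorial_le_exp x hx0.le k
  rw [rpow_add_one hx0.ne'] at hpow
  rw [le_div_iff₀ hx0, exp_neg]
  rw [div_le_iff₀ (by positivity)] at hexp
  calc x ^ α * (exp x)⁻¹ * x = x ^ α * x * (exp x)⁻¹ := by ring
    _ ≤ k.factorial * exp x * (exp x)⁻¹ := by gcongr ?_ * _; linarith
    _ = k.factorial := by field_simp

theorem exists_pow_mul_lt_one_le {p t : ℝ} (hp0 : 0 < p) (hp1 : p < 1) (ht : 1 ≤ t) :
    ∃ n : ℕ, p ^ (n + 1) * t < 1 ∧ 1 ≤ p ^ n * t := by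
  have ht0 : 0 < t := by linarith
  obtain ⟨n, hlt, hle⟩ :=
    exists_nat_pow_near_of_lt_one (inv_pos.2 ht0) (inv_le_one_of_one_le₀ ht) hp0 hp1
  rw [← one_div] at hlt hle
  exact ⟨n, (lt_div_iff₀ ht0).1 hlt, (div_le_iff₀ ht0).1 hle⟩

theorem summable_and_tsum_le_of_geometric_head_tail {f : ℕ → ℝ} {n : ℕ} {a b r q : ℝ}
    (hf : ∀ s, 0 ≤ f s) (hr0 : 0 ≤ r) (hr1 : r < 1) (hq0 : 0 ≤ q) (hq1 : q < 1)
    (head : ∀ s ≤ n, f s ≤ a * r ^ (n - s)) (tail : ∀ i, f (i + (n + 1)) ≤ b * q ^ i) :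
    Summable f ∧ ∑' s, f s ≤ a / (1 - r) + b / (1 - q) := by
  have ha : 0 ≤ a := by simpa using (hf n).trans (head n le_rfl)
  have hgeom := summable_geometric_of_lt_one hq0 hq1
  have htail : Summable fun i ↦ f (i + (n + 1)) :=
    .of_nonneg_of_le (fun i ↦ hf _) tail (hgeom.mul_left b)
  have hsum : Summable f := (summable_nat_add_iff (n + 1)).1 htail
  refine ⟨hsum, ?_⟩
  rw [← hsum.sum_add_tsum_nat_add (n + 1)]
  gcongr
  · calc ∑ s ∈ range (n + 1), f s ≤ ∑ s ∈ range (n + 1), a * r ^ (n - s) :=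
          sum_le_sum fun s hs ↦ head s (Nat.lt_succ_iff.1 (mem_range.1 hs))
      _ = a * ∑ j ∈ Ico 0 (n + 1), r ^ j := by
          have := sum_range_reflect (r ^ ·) (n + 1)
          simp only [add_tsub_cancel_right] at this
          rw [← mul_sum, ← range_eq_Ico, this]
      _ ≤ a * (r ^ 0 / (1 - r)) := by gcongr; exact geom_sum_Ico_le_of_lt_one hr0 hr1
      _ = a / (1 - r) := by ring
  · calc ∑' i, f (i + (n + 1)) ≤ ∑' i, b * q ^ i := htail.tsum_le_tsum tail (hgeom.mul_left b)
      _ = b / (1 - q) := by rw [tsum_mul_left, tsum_geometric_of_lt_one hq0 hq1, div_eq_mul_inv]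

noncomputable def dilationSum (p α t : ℝ) : ℝ :=
  ∑' s : ℕ, (p ^ s * t) ^ α * exp (-(p ^ s * t))

section DilationSum

variable {p α t : ℝ}

theorem summable_dilation_and_dilationSum_le (hp0 : 0 < p) (hp1 : p < 1) (hα : 0 < α)
    (ht : 1 ≤ t) :
    Summable (fun s : ℕ ↦ (p ^ s * t) ^ α * exp (-(p ^ s * t))) ∧
      dilationSum p α t ≤ (⌈α⌉₊ + 1).factorial / (1 - p) + 1 / (1 - p ^ α) := by
  obtain ⟨n, hlt, hle⟩ := exists_pow_mul_lt_one_le hp0 hp1 ht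
  refine summable_and_tsum_le_of_geometric_head_tail (n := n) (fun s ↦ by positivity)
    hp0.le hp1 (by positivity) (rpow_lt_one hp0.le hp1 hα) (fun s hs ↦ ?_) (fun i ↦ ?_)
  · have hpow : p ^ (n - s) * (p ^ s * t) = p ^ n * t := by
      rw [← mul_assoc, ← pow_add, Nat.sub_add_cancel hs]
    have hx : 1 ≤ p ^ s * t := hle.trans <| by
      rw [← hpow]; exact mul_le_of_le_one_left (by positivity) (pow_le_one₀ hp0.le hp1.le)
    calc (p ^ s * t) ^ α * exp (-(p ^ s * t)) ≤ (⌈α⌉₊ + 1).factorial / (p ^ s * t) :=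
          rpow_mul_exp_neg_le_factorial_div α hx
      _ ≤ (⌈α⌉₊ + 1).factorial * p ^ (n - s) := by
          rw [div_le_iff₀ (by linarith), mul_assoc, hpow]
          exact le_mul_of_one_le_right (by positivity) hle
  · have hx : p ^ (i + (n + 1)) * t ≤ p ^ i := by
      rw [pow_add, mul_assoc]; exact mul_le_of_le_one_right (by positivity) hlt.le
    calc (p ^ (i + (n + 1)) * t) ^ α * exp (-(p ^ (i + (n + 1)) * t))
        ≤ (p ^ i) ^ α * 1 := by
          gcongr
          exact exp_le_one_iff.2 (by simp only [Left.neg_nonpos_iff]; positivity)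
      _ = 1 * (p ^ α) ^ i := by rw [rpow_pow_comm hp0.le]; ring

theorem rpow_mul_exp_neg_one_le_dilationSum (hp0 : 0 < p) (hp1 : p < 1) (hα : 0 < α)
    (ht : 1 ≤ t) :
    p ^ α * exp (-1) ≤ dilationSum p α t := by
  obtain ⟨n, hlt, hle⟩ := exists_pow_mul_lt_one_le hp0 hp1 ht
  have hx : p ≤ p ^ (n + 1) * t := by
    rw [pow_succ, mul_right_comm]; exact le_mul_of_one_le_left hp0.le hle
  calc p ^ α * exp (-1) ≤ (p ^ (n + 1) * t) ^ α * exp (-(p ^ (n + 1) * t)) := by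
        gcongr
    _ ≤ dilationSum p α t :=
        (summable_dilation_and_dilationSum_le hp0 hp1 hα ht).1.le_tsum (n + 1)
          (fun s _ ↦ by positivity)

end DilationSum

theorem rpow_log_div_log_inv {p ν : ℝ} (hp0 : 0 < p) (hp1 : p ≠ 1) (hν : 0 < ν) :
    p ^ (log ν / log (1 / p)) = ν⁻¹ := by
  have hlog : log p ≠ 0 := log_ne_zero_of_pos_of_ne_one hp0 hp1
  rw [rpow_def_of_pos hp0, one_div, log_inv, ← exp_log (inv_pos.2 hν), log_inv]
  congr 1
  field_simp

theorem exp_neg_pow_mul_div_pow_eq {p ν α t : ℝ} (hp0 : 0 ≤ p) (hpα : p ^ α = ν⁻¹) (ht : 0 < t)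
    (s : ℕ) :
    exp (-(p ^ s) * t) / ν ^ s = t ^ (-α) * ((p ^ s * t) ^ α * exp (-(p ^ s * t))) := by
  rw [mul_rpow (by positivity) ht.le, ← rpow_pow_comm hp0, hpα, rpow_neg ht.le, neg_mul,
    inv_pow]
  field_simp

/-- Two-sided power-law bound for the hierarchical diagonal heat kernel:
with spectral dimension `s_h = 2 ln ν / ln(1/p)`, one has
`p(t,x,x) ≍ t^{-s_h/2}` for `t ≥ 1`. -/
theorem hierarchical_heat_kernel_power_law
    (ν p : ℝ) (hν : 2 ≤ ν) (hp0 : 0 < p) (hp1 : p < 1) :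
    ∃ C₁ C₂ : ℝ, 0 < C₁ ∧ 0 < C₂ ∧
      ∀ t : ℝ, 1 ≤ t →
        C₁ * t ^ (-(2 * Real.log ν / Real.log (1 / p)) / 2) ≤
          (1 - 1 / ν) * ∑' s : ℕ, Real.exp (-(p ^ s) * t) / ν ^ s ∧
        (1 - 1 / ν) * ∑' s : ℕ, Real.exp (-(p ^ s) * t) / ν ^ s ≤
          C₂ * t ^ (-(2 * Real.log ν / Real.log (1 / p)) / 2) := by
  set α := log ν / log (1 / p)
  have hν1 : 1 < ν := by linarith
  have hα : 0 < α := div_pos (log_pos hν1) (log_pos (one_lt_one_div hp0 hp1))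
  have hpα : p ^ α = ν⁻¹ := rpow_log_div_log_inv hp0 hp1.ne (by positivity)
  have hc : 0 < 1 - 1 / ν := by rw [sub_pos, div_lt_one (by positivity)]; exact hν1
  set C := ((⌈α⌉₊ + 1).factorial / (1 - p) + 1 / (1 - p ^ α) : ℝ)
  have hC : 0 < C := by
    have := rpow_lt_one hp0.le hp1 hα
    have := sub_pos.2 hp1
    positivity
  refine ⟨(1 - 1 / ν) * (p ^ α * exp (-1)), (1 - 1 / ν) * C, by positivity, by positivity,
    fun t ht ↦ ?_⟩
  have hkernel : ∑' s : ℕ, exp (-(p ^ s) * t) / ν ^ s = t ^ (-α) * dilationSum p α t := by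
    simp_rw [exp_neg_pow_mul_div_pow_eq hp0.le hpα (by linarith : (0 : ℝ) < t), tsum_mul_left,
      dilationSum]
  have htα : 0 < t ^ (-α) := by positivity
  rw [show -(2 * log ν / log (1 / p)) / 2 = -α by ring, hkernel]
  constructor
  · have := mul_le_mul_of_nonneg_left (rpow_mul_exp_neg_one_le_dilationSum hp0 hp1 hα ht)
      (mul_pos hc htα).le
    linarith
  · have := mul_le_mul_of_nonneg_left (summable_dilation_and_dilationSum_le hp0 hp1 hα ht).2
      (mul_pos hc htα).le
    linarith
end

section
/- The random walk on Z generated by -(-Δ)^α is transient for 0 < α < 1/2 and recurrent for 1/2 ≤ α ≤ 1; equivalently, ∫_1^∞ (1/2π) ∫_{-π}^π exp(-t(4 sin^2(φ/2))^α) dφ dt < ∞ if and only if α < 1/2. -/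
/-!
On `[-π, π]` Jordan's inequality and `|sin x| ≤ |x|` squeeze the symbol `(4 sin² (φ/2))^α`
between `(|φ|/π)^(2α)` and `|φ|^(2α)`. The Fourier integral of `exp (-b |φ|^q)` over a
fixed interval is comparable to `b^(-1/q)` once `b^(-1/q)` is below the interval's half-length,
so `p_α(t,0,0) ≍ t^(-1/(2α))` for `t ≥ 1`, and this is integrable at infinity iff `α < 1/2`.
-/

open MeasureTheory Real Set

theorem integrableOn_iff_of_mul_le_of_le_mul {X : Type*} [MeasurableSpace X] {μ : Measure X}
    {s : Set X} {f g : X → ℝ} {a b : ℝ} (hs : MeasurableSet s) (ha : 0 < a)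
    (hf : AEStronglyMeasurable f (μ.restrict s)) (hg : AEStronglyMeasurable g (μ.restrict s))
    (hg0 : ∀ x ∈ s, 0 ≤ g x) (hlow : ∀ x ∈ s, a * g x ≤ f x) (hup : ∀ x ∈ s, f x ≤ b * g x) :
    IntegrableOn f s μ ↔ IntegrableOn g s μ := by
  constructor
  · refine fun hfi => (hfi.const_mul a⁻¹).mono' hg (ae_restrict_of_forall_mem hs fun x hx => ?_)
    rw [norm_of_nonneg (hg0 x hx), le_inv_mul_iff₀ ha]
    exact hlow x hx
  · refine fun hgi => (hgi.const_mul b).mono' hf (ae_restrict_of_forall_mem hs fun x hx => ?_)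
    rw [norm_of_nonneg ((mul_nonneg ha.le (hg0 x hx)).trans (hlow x hx))]
    exact hup x hx

theorem intervalIntegral.integral_comp_abs {f : ℝ → ℝ} (hf : Continuous f) {a : ℝ}
    (ha : 0 ≤ a) : ∫ x in -a..a, f |x| = 2 * ∫ x in 0..a, f x := by
  have hfa : Continuous fun x => f |x| := hf.comp continuous_abs
  have hneg : ∫ x in -a..0, f |x| = ∫ x in 0..a, f |x| := by
    simpa using (intervalIntegral.integral_comp_neg (a := 0) (b := a) fun x => f |x|).symm
  have hpos : ∫ x in 0..a, f |x| = ∫ x in 0..a, f x :=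
    intervalIntegral.integral_congr fun x hx => by
      rw [uIcc_of_le ha] at hx
      rw [abs_of_nonneg hx.1]
  rw [← intervalIntegral.integral_add_adjacent_intervals (hfa.intervalIntegrable (-a) 0)
    (hfa.intervalIntegrable 0 a), hneg, hpos, two_mul]

section StretchedExponential

variable {a b q : ℝ}

theorem continuous_exp_neg_mul_abs_rpow (hq : 0 ≤ q) (b : ℝ) :
    Continuous fun x : ℝ => exp (-b * |x| ^ q) :=
  continuous_exp.comp <| continuous_const.mul <|
    continuous_abs.rpow_const fun _ => Or.inr hq

theorem integral_exp_neg_mul_abs_rpow_le (ha : 0 ≤ a) (hq : 0 < q) (hb : 0 < b) :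
    ∫ x in -a..a, exp (-b * |x| ^ q) ≤ 2 * Gamma (1 / q + 1) * b ^ (-1 / q) := by
  have hint : IntegrableOn (fun x : ℝ => exp (-b * x ^ q)) (Ioi 0) := by
    simpa using integrableOn_rpow_mul_exp_neg_mul_rpow neg_one_lt_zero hq hb
  calc ∫ x in -a..a, exp (-b * |x| ^ q)
      = 2 * ∫ x in 0..a, exp (-b * x ^ q) :=
        intervalIntegral.integral_comp_abs (f := fun x => exp (-b * x ^ q))
          (continuous_exp.comp <| continuous_const.mul <|
            continuous_id.rpow_const fun _ => Or.inr hq.le) ha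
    _ ≤ 2 * ∫ x in Ioi 0, exp (-b * x ^ q) := by
        rw [intervalIntegral.integral_of_le ha]
        exact mul_le_mul_of_nonneg_left (setIntegral_mono_set hint
          (.of_forall fun _ => (exp_pos _).le) Ioc_subset_Ioi_self.eventuallyLE) zero_le_two
    _ = 2 * Gamma (1 / q + 1) * b ^ (-1 / q) := by
        rw [integral_exp_neg_mul_rpow hq hb]
        ring

theorem two_mul_exp_neg_one_mul_rpow_le_integral (hq : 0 < q) (hb : 0 < b)
    (hba : b ^ (-1 / q) ≤ a) :
    2 * exp (-1) * b ^ (-1 / q) ≤ ∫ x in -a..a, exp (-b * |x| ^ q) := by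
  set r := b ^ (-1 / q)
  have hr : 0 < r := rpow_pos_of_pos hb _
  have hbr : b * r ^ q = 1 := by
    rw [← rpow_mul hb.le, div_mul_cancel₀ _ hq.ne', rpow_neg_one, mul_inv_cancel₀ hb.ne']
  have hcont := continuous_exp_neg_mul_abs_rpow hq.le b
  calc 2 * exp (-1) * r = ∫ _ in -r..r, exp (-1) := by simp; ring
    _ ≤ ∫ x in -r..r, exp (-b * |x| ^ q) := by
        refine intervalIntegral.integral_mono_on (by linarith) intervalIntegrable_const
          (hcont.intervalIntegrable _ _) fun x hx => exp_le_exp.2 ?_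
        have : |x| ^ q ≤ r ^ q := rpow_le_rpow (abs_nonneg x) (abs_le.2 hx) hq.le
        nlinarith
    _ ≤ ∫ x in -a..a, exp (-b * |x| ^ q) :=
        intervalIntegral.integral_mono_interval (by linarith) (by linarith) hba
          (.of_forall fun _ => (exp_pos _).le) (hcont.intervalIntegrable _ _)

end StretchedExponential

/-- The Fourier symbol of `(-Δ)^α` on `ℤ`. -/
noncomputable def fracSymbol (α φ : ℝ) : ℝ := (4 * sin (φ / 2) ^ 2) ^ α

/-- The diagonal heat kernel `p_α(t, 0, 0)` of `-(-Δ)^α` on `ℤ`, by Fourier inversion. -/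
noncomputable def fracHeatKernelDiag (α t : ℝ) : ℝ :=
  1 / (2 * π) * ∫ φ in -π..π, exp (-t * fracSymbol α φ)

section FracSymbol

variable {α : ℝ}

theorem continuous_fracSymbol (hα : 0 ≤ α) : Continuous (fracSymbol α) :=
  (by fun_prop : Continuous fun φ : ℝ => 4 * sin (φ / 2) ^ 2).rpow_const fun _ => Or.inr hα

theorem fracSymbol_le_abs_rpow (hα : 0 ≤ α) (φ : ℝ) : fracSymbol α φ ≤ |φ| ^ (2 * α) := by
  rw [fracSymbol, rpow_mul (abs_nonneg φ), rpow_two, sq_abs]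
  exact rpow_le_rpow (by positivity) (by nlinarith [sin_sq_le_sq (x := φ / 2)]) hα

theorem abs_div_pi_rpow_le_fracSymbol (hα : 0 ≤ α) {φ : ℝ} (hφ : |φ| ≤ π) :
    (|φ| / π) ^ (2 * α) ≤ fracSymbol α φ := by
  have jordan : |φ| / π ≤ |sin (φ / 2)| := by
    have := mul_abs_le_abs_sin (x := φ / 2) (by rw [abs_div, abs_two]; linarith)
    rwa [abs_div, abs_two, show 2 / π * (|φ| / 2) = |φ| / π by ring] at this
  rw [fracSymbol, rpow_mul (by positivity), rpow_two]
  refine rpow_le_rpow (by positivity) ?_ hα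
  nlinarith [pow_le_pow_left₀ (by positivity) jordan 2, sq_abs (sin (φ / 2))]

end FracSymbol

section FracHeatKernelDiag

variable {α t : ℝ}

theorem continuous_fracHeatKernelDiag (hα : 0 ≤ α) : Continuous (fracHeatKernelDiag α) :=
  continuous_const.mul <| intervalIntegral.continuous_parametric_intervalIntegral_of_continuous'
    (f := fun t φ => exp (-t * fracSymbol α φ))
    (continuous_exp.comp <| continuous_fst.neg.mul <|
      (continuous_fracSymbol hα).comp continuous_snd) _ _

theorem fracHeatKernelDiag_le (hα : 0 < α) (ht : 0 < t) :
    fracHeatKernelDiag α t ≤ Gamma (1 / (2 * α) + 1) * t ^ (-1 / (2 * α)) := by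
  have hq : 0 < 2 * α := by positivity
  have hb : 0 < t * π ^ (-(2 * α)) := mul_pos ht (rpow_pos_of_pos pi_pos _)
  have hcmp : ∫ φ in -π..π, exp (-t * fracSymbol α φ)
      ≤ ∫ φ in -π..π, exp (-(t * π ^ (-(2 * α))) * |φ| ^ (2 * α)) := by
    refine intervalIntegral.integral_mono_on (by linarith [pi_pos])
      ((continuous_exp.comp <| continuous_const.mul <|
        continuous_fracSymbol hα.le).intervalIntegrable _ _)
      ((continuous_exp_neg_mul_abs_rpow hq.le _).intervalIntegrable _ _)
      fun φ hφ => exp_le_exp.2 ?_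
    have h := abs_div_pi_rpow_le_fracSymbol hα.le (abs_le.2 hφ)
    rw [div_rpow (abs_nonneg φ) pi_pos.le, div_eq_mul_inv, ← rpow_neg pi_pos.le] at h
    nlinarith
  have hscale : (t * π ^ (-(2 * α))) ^ (-1 / (2 * α)) = π * t ^ (-1 / (2 * α)) := by
    rw [mul_rpow ht.le (rpow_pos_of_pos pi_pos _).le, ← rpow_mul pi_pos.le,
      show -(2 * α) * (-1 / (2 * α)) = 1 by field_simp, rpow_one, mul_comm]
  calc fracHeatKernelDiag α t
      ≤ 1 / (2 * π) * (2 * Gamma (1 / (2 * α) + 1) * (t * π ^ (-(2 * α))) ^ (-1 / (2 * α))) :=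
        mul_le_mul_of_nonneg_left (hcmp.trans (integral_exp_neg_mul_abs_rpow_le pi_pos.le hq hb))
          (by positivity)
    _ = Gamma (1 / (2 * α) + 1) * t ^ (-1 / (2 * α)) := by
        rw [hscale]
        field_simp

theorem exp_neg_one_div_pi_mul_rpow_le_fracHeatKernelDiag (hα : 0 < α) (ht : 1 ≤ t) :
    exp (-1) / π * t ^ (-1 / (2 * α)) ≤ fracHeatKernelDiag α t := by
  have hq : 0 < 2 * α := by positivity
  have hcmp : ∫ φ in -π..π, exp (-t * |φ| ^ (2 * α))
      ≤ ∫ φ in -π..π, exp (-t * fracSymbol α φ) :=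
    intervalIntegral.integral_mono_on (by linarith [pi_pos])
      ((continuous_exp_neg_mul_abs_rpow hq.le _).intervalIntegrable _ _)
      ((continuous_exp.comp <| continuous_const.mul <|
        continuous_fracSymbol hα.le).intervalIntegrable _ _)
      fun φ _ => exp_le_exp.2 <| by
        nlinarith [fracSymbol_le_abs_rpow hα.le φ]
  have hsmall : t ^ (-1 / (2 * α)) ≤ π :=
    (rpow_le_one_of_one_le_of_nonpos ht (div_nonpos_of_nonpos_of_nonneg (by norm_num)
      hq.le)).trans (by linarith [pi_gt_three])
  calc exp (-1) / π * t ^ (-1 / (2 * α))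
      = 1 / (2 * π) * (2 * exp (-1) * t ^ (-1 / (2 * α))) := by field_simp
    _ ≤ fracHeatKernelDiag α t :=
        mul_le_mul_of_nonneg_left
          ((two_mul_exp_neg_one_mul_rpow_le_integral hq (by linarith) hsmall).trans hcmp)
          (by positivity)

end FracHeatKernelDiag

theorem fractional_lattice_walk_transience_general
    (α : ℝ) (hα0 : 0 < α) :
    IntegrableOn (fun t : ℝ =>
        (1 / (2 * Real.pi)) *
          ∫ φ in (-Real.pi)..Real.pi, Real.exp (-t * (4 * Real.sin (φ / 2) ^ 2) ^ α))
      (Set.Ici (1 : ℝ)) ↔ α < 1 / 2 := by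
  change IntegrableOn (fracHeatKernelDiag α) (Ici 1) ↔ α < 1 / 2
  rw [integrableOn_iff_of_mul_le_of_le_mul (g := fun t => t ^ (-1 / (2 * α))) measurableSet_Ici
      (div_pos (exp_pos _) pi_pos)
      (continuous_fracHeatKernelDiag hα0.le).aestronglyMeasurable
      (measurable_id.pow_const _).aestronglyMeasurable
      (fun t ht => (rpow_pos_of_pos (one_pos.trans_le ht) _).le)
      (fun t ht => exp_neg_one_div_pi_mul_rpow_le_fracHeatKernelDiag hα0 ht)
      (fun t ht => fracHeatKernelDiag_le hα0 (one_pos.trans_le ht)),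
    integrableOn_Ici_iff_integrableOn_Ioi, integrableOn_Ioi_rpow_iff one_pos,
    div_lt_iff₀ (by positivity)]
  constructor <;> intro h <;> linarith

/-- The random walk on `ℤ` generated by `-(-Δ)^α`, `0 < α ≤ 1`, is transient iff
`α < 1/2`: the diagonal heat kernel `p_α(t,0,0)` is integrable on `[1,∞)` iff `α < 1/2`. -/
theorem fractional_lattice_walk_transience
    (α : ℝ) (hα0 : 0 < α) (hα1 : α ≤ 1) :
    IntegrableOn (fun t : ℝ =>
        (1 / (2 * Real.pi)) *
          ∫ φ in (-Real.pi)..Real.pi, Real.exp (-t * (4 * Real.sin (φ / 2) ^ 2) ^ α))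
      (Set.Ici (1 : ℝ)) ↔ α < 1 / 2 :=
  fractional_lattice_walk_transience_general α hα0
end

section
/- Consider the 2-D lattice Schrödinger operator H = -Δ - V on ℓ^2(Z^2) with V ≥ 0. If Σ_{x∈Z^2} V(x) = ∞, then H has infinitely many negative eigenvalues. More precisely, for every ε > 0 and every finite set S ⊂ Z^2 there exists a finitely supported ψ: Z^2 → [0,1] with support disjoint from S such that ⟨Hψ, ψ⟩ < 0. -/
/-!
The quadratic form of `-Δ` on a finitely supported `ψ` is its Dirichlet energy
`Σ_x (ψ x - ψ (x + e₁))² + (ψ x - ψ (x + e₂))²`. Take `ψ` vanishing on the sup-norm ball of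
radius `k` containing `S`, equal to `1` on the annulus `k < |x| ≤ l`, and decaying linearly to
`0` at `|x| = 2l`. Near the inner edge the energy is at most the number of lattice points there,
`(2k + 3)²`; on the slope each term is at most `1/l²` over `(4l + 1)²` points, so the energy is
bounded independently of `l`. This is where the dimension two enters. Meanwhile
`⟨Vψ, ψ⟩ ≥ Σ_{k < |x| ≤ l} V x`, which is unbounded in `l` since `V` is not summable.
-/

open Finset Function

theorem summable_mul_of_finite_support {α : Type*} {ψ : α → ℝ} (hψ : (support ψ).Finite)
    (g : α → ℝ) : Summable fun x => g x * ψ x :=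
  summable_of_hasFiniteSupport (hψ.subset (support_mul_subset_right _ _))

theorem tsum_two_mul_sub_sub_mul_self {G : Type*} [AddCommGroup G] {ψ : G → ℝ}
    (hψ : (support ψ).Finite) (e : G) :
    ∑' x, (2 * ψ x - ψ (x + e) - ψ (x - e)) * ψ x = ∑' x, (ψ x - ψ (x + e)) ^ 2 := by
  have hsum := summable_mul_of_finite_support hψ
  have hsum_shift : Summable fun x => (ψ (x + e) - ψ x) * ψ (x + e) := by
    simpa [comp_def] using
      (Equiv.addRight e).summable_iff.2 (hsum fun x => ψ x - ψ (x - e))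
  have hshift : ∑' x, (ψ x - ψ (x - e)) * ψ x = ∑' x, (ψ (x + e) - ψ x) * ψ (x + e) := by
    rw [← (Equiv.addRight e).tsum_eq]
    simp
  calc ∑' x, (2 * ψ x - ψ (x + e) - ψ (x - e)) * ψ x
      = ∑' x, ((ψ x - ψ (x + e)) * ψ x + (ψ x - ψ (x - e)) * ψ x) :=
        tsum_congr fun x => by ring
    _ = ∑' x, (ψ x - ψ (x + e)) * ψ x + ∑' x, (ψ (x + e) - ψ x) * ψ (x + e) := by
        rw [(hsum _).tsum_add (hsum _), hshift]
    _ = ∑' x, (ψ x - ψ (x + e)) ^ 2 := by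
        rw [← (hsum _).tsum_add hsum_shift]
        exact tsum_congr fun x => by ring

theorem tsum_schroedinger_form_eq {ψ : ℤ × ℤ → ℝ} (hψ : (support ψ).Finite) (V : ℤ × ℤ → ℝ) :
    ∑' x : ℤ × ℤ,
        (-(ψ (x.1 + 1, x.2) + ψ (x.1 - 1, x.2) + ψ (x.1, x.2 + 1) + ψ (x.1, x.2 - 1)
          - 4 * ψ x) - V x * ψ x) * ψ x
      = ∑' x, (ψ x - ψ (x + (1, 0))) ^ 2 + ∑' x, (ψ x - ψ (x + (0, 1))) ^ 2
        - ∑' x, V x * ψ x * ψ x := by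
  have hsum := summable_mul_of_finite_support hψ
  rw [← tsum_two_mul_sub_sub_mul_self hψ, ← tsum_two_mul_sub_sub_mul_self hψ,
    ← (hsum _).tsum_add (hsum _), ← ((hsum _).add (hsum _)).tsum_sub (hsum _)]
  refine tsum_congr fun x => ?_
  obtain ⟨a, b⟩ := x
  simp only [Prod.mk_add_mk, Prod.mk_sub_mk, add_zero, sub_zero]
  ring

def supRadius (x : ℤ × ℤ) : ℕ := max x.1.natAbs x.2.natAbs

noncomputable def supBall (n : ℕ) : Finset (ℤ × ℤ) := Icc (-(n : ℤ), -(n : ℤ)) (n, n)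

theorem supRadius_add_le (x y : ℤ × ℤ) : supRadius (x + y) ≤ supRadius x + supRadius y := by
  simp only [supRadius, Prod.fst_add, Prod.snd_add]
  omega

theorem supRadius_le_add (x y : ℤ × ℤ) : supRadius x ≤ supRadius (x + y) + supRadius y := by
  simp only [supRadius, Prod.fst_add, Prod.snd_add]
  omega

theorem mem_supBall {x : ℤ × ℤ} {n : ℕ} : x ∈ supBall n ↔ supRadius x ≤ n := by
  simp only [supBall, mem_Icc, Prod.le_def, supRadius]
  omega

theorem supBall_mono {m n : ℕ} (h : m ≤ n) : supBall m ⊆ supBall n := fun _ hx =>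
  mem_supBall.2 ((mem_supBall.1 hx).trans h)

theorem card_supBall (n : ℕ) : #(supBall n) = (2 * n + 1) ^ 2 := by
  rw [supBall, Icc_prod_def, card_product, Int.card_Icc, sq]
  congr 1 <;> omega

theorem exists_lt_sum_supBall {V : ℤ × ℤ → ℝ} (hV : ∀ x, 0 ≤ V x) (hdiv : ¬ Summable V)
    (C : ℝ) : ∃ n, C < ∑ x ∈ supBall n, V x := by
  by_contra! hle
  refine hdiv (summable_of_sum_le (c := C) hV fun F => ?_)
  have hF : F ⊆ supBall (F.sup supRadius) := fun x hx => mem_supBall.2 (le_sup hx)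
  exact (sum_le_sum_of_subset_of_nonneg hF fun y _ _ => hV y).trans (hle _)

noncomputable def plateau (k l : ℕ) (x : ℤ × ℤ) : ℝ :=
  if supRadius x ≤ k then 0
  else Set.projIcc (0 : ℝ) 1 zero_le_one ((2 * l - supRadius x) / l)

theorem plateau_mem_Icc (k l : ℕ) (x : ℤ × ℤ) : plateau k l x ∈ Set.Icc (0 : ℝ) 1 := by
  unfold plateau
  split_ifs
  · exact Set.left_mem_Icc.2 zero_le_one
  · exact Subtype.property _

theorem plateau_eq_zero_of_supRadius_le {k l : ℕ} {x : ℤ × ℤ} (h : supRadius x ≤ k) :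
    plateau k l x = 0 := if_pos h

theorem plateau_eq_zero_of_le_supRadius {k l : ℕ} {x : ℤ × ℤ} (h : 2 * l ≤ supRadius x) :
    plateau k l x = 0 := by
  unfold plateau
  split_ifs
  · rfl
  rw [Set.projIcc_of_le_left]
  have : (2 * l : ℝ) ≤ supRadius x := by exact_mod_cast h
  exact div_nonpos_of_nonpos_of_nonneg (by linarith) (Nat.cast_nonneg l)

theorem plateau_eq_one {k l : ℕ} {x : ℤ × ℤ} (hk : k < supRadius x) (hl : supRadius x ≤ l) :
    plateau k l x = 1 := by
  have hl₀ : (0 : ℝ) < l := by exact_mod_cast (by omega : 0 < l)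
  have hr : (supRadius x : ℝ) ≤ l := by exact_mod_cast hl
  rw [plateau, if_neg (by omega), Set.projIcc_of_right_le]
  rw [le_div_iff₀ hl₀]
  linarith

theorem finite_support_plateau (k l : ℕ) : (support (plateau k l)).Finite :=
  (supBall (2 * l)).finite_toSet.subset fun x hx =>
    mem_supBall.2 (by by_contra! h; exact hx (plateau_eq_zero_of_le_supRadius h.le))

theorem plateau_sub_sq_le_of_lt {k l : ℕ} (hl : 0 < l) {x y : ℤ × ℤ} (hx : k + 1 < supRadius x)
    (hxy : supRadius y ≤ supRadius x + 1 ∧ supRadius x ≤ supRadius y + 1) :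
    (plateau k l x - plateau k l y) ^ 2 ≤ 1 / (l : ℝ) ^ 2 := by
  have hl₀ : (0 : ℝ) < l := by exact_mod_cast hl
  have hr : |(supRadius y : ℝ) - supRadius x| ≤ 1 := by
    have h₁ : (supRadius y : ℝ) ≤ supRadius x + 1 := by exact_mod_cast hxy.1
    have h₂ : (supRadius x : ℝ) ≤ supRadius y + 1 := by exact_mod_cast hxy.2
    rw [abs_le]
    constructor <;> linarith
  have hdiff : |plateau k l x - plateau k l y| ≤ 1 / l := by
    rw [plateau, plateau, if_neg (by omega), if_neg (by omega)]
    refine (Set.abs_projIcc_sub_projIcc _).trans ?_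
    rw [div_sub_div_same, abs_div, abs_of_pos hl₀]
    gcongr
    rwa [sub_sub_sub_cancel_left]
  rw [← sq_abs, ← one_div_pow]
  gcongr

theorem tsum_plateau_sub_sq_le {k l : ℕ} (hkl : k + 2 ≤ l) {e : ℤ × ℤ} (he : supRadius e ≤ 1) :
    ∑' x, (plateau k l x - plateau k l (x + e)) ^ 2 ≤ (2 * k + 3) ^ 2 + 25 := by
  have hl : (1 : ℝ) ≤ l := by exact_mod_cast (by omega : 1 ≤ l)
  have hshift : ∀ x, supRadius (x + e) ≤ supRadius x + 1 ∧ supRadius x ≤ supRadius (x + e) + 1 :=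
    fun x => ⟨(supRadius_add_le x e).trans (by omega), (supRadius_le_add x e).trans (by omega)⟩
  have hzero : ∀ x ∉ supBall (2 * l), (plateau k l x - plateau k l (x + e)) ^ 2 = 0 := by
    intro x hx
    have hx' := mt mem_supBall.2 hx
    rw [plateau_eq_zero_of_le_supRadius (by omega),
      plateau_eq_zero_of_le_supRadius (by linarith [hshift x]), sub_zero, sq, zero_mul]
  rw [tsum_eq_sum hzero, ← sum_inter_add_sum_sdiff (supBall (2 * l)) (supBall (k + 1))]
  have hinner : ∑ x ∈ supBall (2 * l) ∩ supBall (k + 1), (plateau k l x - plateau k l (x + e)) ^ 2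
      ≤ (2 * k + 3) ^ 2 := by
    refine (sum_le_card_nsmul _ _ 1 fun x _ => ?_).trans ?_
    · obtain ⟨h₀, h₁⟩ := plateau_mem_Icc k l x
      obtain ⟨h₀', h₁'⟩ := plateau_mem_Icc k l (x + e)
      nlinarith
    · have hcard :=
        card_le_card (inter_subset_right (s₁ := supBall (2 * l)) (s₂ := supBall (k + 1)))
      rw [card_supBall] at hcard
      rw [nsmul_eq_mul, mul_one]
      calc (#(supBall (2 * l) ∩ supBall (k + 1)) : ℝ) ≤ ((2 * (k + 1) + 1) ^ 2 : ℕ) := by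
            exact_mod_cast hcard
        _ = (2 * k + 3) ^ 2 := by push_cast; ring
  have hslope : ∑ x ∈ supBall (2 * l) \ supBall (k + 1), (plateau k l x - plateau k l (x + e)) ^ 2
      ≤ 25 := by
    refine (sum_le_card_nsmul _ _ (1 / (l : ℝ) ^ 2) fun x hx => ?_).trans ?_
    · exact plateau_sub_sq_le_of_lt (by omega)
        (by have := mt mem_supBall.2 (mem_sdiff.1 hx).2; omega) (hshift x)
    · have hcard := card_le_card (sdiff_subset (s := supBall (2 * l)) (t := supBall (k + 1)))
      rw [card_supBall] at hcard
      rw [nsmul_eq_mul, mul_one_div, div_le_iff₀ (by positivity)]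
      calc (#(supBall (2 * l) \ supBall (k + 1)) : ℝ) ≤ ((2 * (2 * l) + 1) ^ 2 : ℕ) := by
            exact_mod_cast hcard
        _ ≤ 25 * l ^ 2 := by push_cast; nlinarith
  linarith

theorem sum_supBall_sdiff_le_tsum_mul_plateau {V : ℤ × ℤ → ℝ} (hV : ∀ x, 0 ≤ V x) (k l : ℕ) :
    ∑ x ∈ supBall l \ supBall k, V x ≤ ∑' x, V x * plateau k l x * plateau k l x := by
  have hsum := summable_mul_of_finite_support (finite_support_plateau k l)
    fun x => V x * plateau k l x
  calc ∑ x ∈ supBall l \ supBall k, V x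
      = ∑ x ∈ supBall l \ supBall k, V x * plateau k l x * plateau k l x := by
        refine sum_congr rfl fun x hx => ?_
        rw [mem_sdiff, mem_supBall, mem_supBall] at hx
        rw [plateau_eq_one (by omega) hx.1, mul_one, mul_one]
    _ ≤ ∑' x, V x * plateau k l x * plateau k l x :=
        hsum.sum_le_tsum _ fun x _ => by
          rw [mul_assoc]; exact mul_nonneg (hV x) (mul_self_nonneg _)

/-- For the 2-D lattice Schrödinger operator `H = -Δ - V` with `V ≥ 0` and
`Σ_{x∈ℤ²} V(x) = ∞`: for every `ε > 0` and every finite set `S ⊂ ℤ²` there is a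
finitely supported `ψ : ℤ² → [0,1]` with support disjoint from `S` and `⟨Hψ,ψ⟩ < 0`
(so that `H` has infinitely many negative eigenvalues). -/
theorem lattice_2d_infinite_negative_spectrum
    (V : ℤ × ℤ → ℝ) (hV : ∀ x, 0 ≤ V x) (hdiv : ¬ Summable V) :
    ∀ ε : ℝ, 0 < ε → ∀ S : Finset (ℤ × ℤ),
      ∃ ψ : ℤ × ℤ → ℝ,
        (Function.support ψ).Finite ∧
        (∀ x, 0 ≤ ψ x ∧ ψ x ≤ 1) ∧
        (∀ x ∈ S, ψ x = 0) ∧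
        (∑' x : ℤ × ℤ,
          (-(ψ (x.1 + 1, x.2) + ψ (x.1 - 1, x.2) + ψ (x.1, x.2 + 1) + ψ (x.1, x.2 - 1)
              - 4 * ψ x) - V x * ψ x) * ψ x) < 0 := by
  intro _ _ S
  set k := S.sup supRadius
  obtain ⟨n, hn⟩ :=
    exists_lt_sum_supBall hV hdiv (2 * ((2 * k + 3) ^ 2 + 25) + ∑ x ∈ supBall k, V x)
  set l := max (k + 2) n
  have hkl : k + 2 ≤ l := le_max_left _ _
  have hψ := finite_support_plateau k l
  refine ⟨plateau k l, hψ, plateau_mem_Icc k l,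
    fun x hx => plateau_eq_zero_of_supRadius_le (le_sup hx), ?_⟩
  rw [tsum_schroedinger_form_eq hψ]
  have henergy₁ := tsum_plateau_sub_sq_le hkl (e := (1, 0)) (by decide)
  have henergy₂ := tsum_plateau_sub_sq_le hkl (e := (0, 1)) (by decide)
  have hpotential := sum_supBall_sdiff_le_tsum_mul_plateau hV k l
  rw [sum_sdiff_eq_sub (supBall_mono (by omega))] at hpotential
  have hn_le : ∑ x ∈ supBall n, V x ≤ ∑ x ∈ supBall l, V x :=
    sum_le_sum_of_subset_of_nonneg (supBall_mono (le_max_right _ _)) fun x _ _ => hV x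
  linarith
end
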